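/- Let k, ω̃, τ, λ ∈ ℝ with τ > 0, and for n ∈ ℤ define uₙ : ℝ → ℂ by uₙ(x) = exp(i·(k·x − ω̃·n·τ)). Suppose that for all n ∈ ℤ and x ∈ ℝ the Leapfrog scheme holds: (i/(2τ))·(u_{n+1}(x) − u_{n−1}(x)) = −(1/4)·(Δu_{n+1}(x) + 2·Δuₙ(x) + Δu_{n−1}(x)) + (λ/8)·( |(uₙ(x)+u_{n−1}(x))/2|² + |(u_{n+1}(x)+uₙ(x))/2|² )·(u_{n+1}(x) + 2·uₙ(x) + u_{n−1}(x)). If moreover cos(ω̃·τ/2) ≠ 0, then (2/τ)·sin(ω̃·τ/2) = (k² + λ·cos²(ω̃·τ/2))·cos(ω̃·τ/2). -/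

import Mathlib

/-!
With `θ = ω̃τ`, each plane wave is an eigenfunction of `Δ` with eigenvalue `-k²`, and at `n = 0`,
`x = 0` the half-angle identities `|(1 + e^{iθ})/2|² = cos²(θ/2)` and
`e^{-iθ} + 2 + e^{iθ} = 4 cos²(θ/2)` collapse the scheme to the real equation
`sin θ / τ = (k² + λ cos²(θ/2)) cos²(θ/2)`. Writing `sin θ = 2 sin(θ/2) cos(θ/2)` and cancelling
one factor `cos(θ/2)` gives the dispersion relation.
-/

open Complex

theorem deriv_deriv_cexp_mul_add (a b : ℂ) :
    deriv (deriv fun x : ℝ => cexp (a * x + b)) = fun x : ℝ => a ^ 2 * cexp (a * x + b) := by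
  have hasDeriv (c : ℂ) (x : ℝ) :
      HasDerivAt (fun x : ℝ => c * cexp (a * x + b)) (c * a * cexp (a * x + b)) x := by
    refine ((((hasDerivAt_id x).ofReal_comp).const_mul a).add_const b).cexp.const_mul c
      |>.congr_deriv ?_
    simp only [id, ofReal_one]; ring
  have first : deriv (fun x : ℝ => cexp (a * x + b)) = fun x : ℝ => a * cexp (a * x + b) := by
    funext x; simpa using (hasDeriv 1 x).deriv
  rw [first]; funext x; rw [(hasDeriv a x).deriv, sq]

theorem deriv_deriv_plane_wave (k c : ℝ) :
    deriv (deriv fun x : ℝ => cexp (I * ((k * x - c : ℝ) : ℂ))) =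
      fun x : ℝ => -(k : ℂ) ^ 2 * cexp (I * ((k * x - c : ℝ) : ℂ)) := by
  have affine : ∀ x : ℝ, I * ((k * x - c : ℝ) : ℂ) = I * k * x + -(I * c) := by
    intro x; push_cast; ring
  simp only [affine, deriv_deriv_cexp_mul_add, mul_pow, I_sq, neg_one_mul]

theorem Complex.exp_mul_I_mul_exp_neg_mul_I (z : ℂ) : cexp (z * I) * cexp (-z * I) = 1 := by
  rw [← exp_add, neg_mul, add_neg_cancel, exp_zero]

theorem Complex.exp_mul_I_eq_exp_half_mul_I_sq (z : ℂ) : cexp (z * I) = cexp (z / 2 * I) ^ 2 := by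
  rw [← exp_nat_mul]; ring_nf

theorem Complex.exp_mul_I_add_one (z : ℂ) :
    cexp (z * I) + 1 = 2 * cos (z / 2) * cexp (z / 2 * I) := by
  rw [two_cos, exp_mul_I_eq_exp_half_mul_I_sq z]
  linear_combination -exp_mul_I_mul_exp_neg_mul_I (z / 2)

theorem Complex.exp_neg_mul_I_add_two_add_exp_mul_I (z : ℂ) :
    cexp (-z * I) + 2 + cexp (z * I) = (2 * cos (z / 2)) ^ 2 := by
  rw [two_cos, exp_mul_I_eq_exp_half_mul_I_sq z, exp_mul_I_eq_exp_half_mul_I_sq (-z), neg_div]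
  linear_combination -2 * exp_mul_I_mul_exp_neg_mul_I (z / 2)

theorem Complex.norm_exp_ofReal_mul_I_add_one_div_two_sq (θ : ℝ) :
    ‖(cexp (θ * I) + 1) / 2‖ ^ 2 = Real.cos (θ / 2) ^ 2 := by
  rw [exp_mul_I_add_one, mul_assoc, mul_div_cancel_left₀ _ two_ne_zero, norm_mul,
    ← ofReal_ofNat, ← ofReal_div, ← ofReal_cos, norm_exp_ofReal_mul_I, mul_one, norm_real,
    Real.norm_eq_abs, sq_abs]

theorem leapfrog_dispersion_relation_general
    (k ω τ lam : ℝ)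
    (u : ℤ → ℝ → ℂ)
    (hu : ∀ n : ℤ, ∀ x : ℝ, u n x = Complex.exp (Complex.I * ((k*x - ω*n*τ : ℝ) : ℂ)))
    (hscheme : ∀ n : ℤ, ∀ x : ℝ,
      (Complex.I / (2 * (τ : ℂ))) * (u (n+1) x - u (n-1) x) =
        -(1/4 : ℂ) * (deriv (deriv (u (n+1))) x + 2 * deriv (deriv (u n)) x
            + deriv (deriv (u (n-1))) x)
        + ((lam : ℂ)/8) *
            ((((‖(u n x + u (n-1) x) / 2‖)^2
              + (‖(u (n+1) x + u n x) / 2‖)^2 : ℝ)) : ℂ)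
            * (u (n+1) x + 2 * u n x + u (n-1) x))
    (hcos : Real.cos (ω * τ / 2) ≠ 0) :
    (2/τ) * Real.sin (ω * τ / 2)
      = (k^2 + lam * (Real.cos (ω * τ / 2))^2) * Real.cos (ω * τ / 2) := by
  have hΔ (n : ℤ) (x : ℝ) : deriv (deriv (u n)) x = -(k : ℂ) ^ 2 * u n x := by
    rw [funext (hu n), deriv_deriv_plane_wave]
  have hu_zero : u 0 0 = 1 := by simp [hu]
  have hu_one : u 1 0 = cexp (-((ω * τ : ℝ) : ℂ) * I) := by rw [hu]; push_cast; ring_nf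
  have hu_neg_one : u (-1) 0 = cexp (((ω * τ : ℝ) : ℂ) * I) := by rw [hu]; push_cast; ring_nf
  have key := hscheme 0 0
  simp only [hΔ, zero_add, zero_sub, hu_zero, hu_one, hu_neg_one] at key
  rw [add_comm 1, norm_exp_ofReal_mul_I_add_one_div_two_sq, ← ofReal_neg,
    norm_exp_ofReal_mul_I_add_one_div_two_sq, neg_div, Real.cos_neg] at key
  have hreal : Real.sin (ω * τ) / τ
      = (k ^ 2 + lam * Real.cos (ω * τ / 2) ^ 2) * Real.cos (ω * τ / 2) ^ 2 := by
    have hsin := two_sin ((ω * τ : ℝ) : ℂ)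
    have hsum := exp_neg_mul_I_add_two_add_exp_mul_I ((ω * τ : ℝ) : ℂ)
    apply ofReal_injective
    push_cast at key hsin hsum ⊢
    linear_combination key + hsin / (2 * τ) + ((k : ℂ) ^ 2 + lam * cos (ω * τ / 2) ^ 2) / 4 * hsum
  have hsin : Real.sin (ω * τ) = 2 * Real.sin (ω * τ / 2) * Real.cos (ω * τ / 2) := by
    rw [← Real.sin_two_mul, mul_div_cancel₀ _ two_ne_zero]
  apply mul_right_cancel₀ hcos
  linear_combination hreal - hsin / τ

/-- Numerical dispersion relation of the Leapfrog scheme for the cubic NLS: if the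
discrete plane wave `uₙ(x) = exp(i(kx − ω̃nτ))` satisfies the scheme and
`cos(ω̃τ/2) ≠ 0`, then `(2/τ)sin(ω̃τ/2) = (k² + λcos²(ω̃τ/2))cos(ω̃τ/2)`. -/
theorem leapfrog_dispersion_relation
    (k ω τ lam : ℝ) (hτ : 0 < τ)
    (u : ℤ → ℝ → ℂ)
    (hu : ∀ n : ℤ, ∀ x : ℝ, u n x = Complex.exp (Complex.I * ((k*x - ω*n*τ : ℝ) : ℂ)))
    (hscheme : ∀ n : ℤ, ∀ x : ℝ,
      (Complex.I / (2 * (τ : ℂ))) * (u (n+1) x - u (n-1) x) =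
        -(1/4 : ℂ) * (deriv (deriv (u (n+1))) x + 2 * deriv (deriv (u n)) x
            + deriv (deriv (u (n-1))) x)
        + ((lam : ℂ)/8) *
            ((((‖(u n x + u (n-1) x) / 2‖)^2
              + (‖(u (n+1) x + u n x) / 2‖)^2 : ℝ)) : ℂ)
            * (u (n+1) x + 2 * u n x + u (n-1) x))
    (hcos : Real.cos (ω * τ / 2) ≠ 0) :
    (2/τ) * Real.sin (ω * τ / 2)
      = (k^2 + lam * (Real.cos (ω * τ / 2))^2) * Real.cos (ω * τ / 2) :=
  leapfrog_dispersion_relation_general k ω τ lam u hu hscheme hcos
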